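/- arXiv:2106.08033 — 7 statements merged into one kernel-verified Lean document; each statement's English description precedes it below -/
import Mathlib

section
/- Let A and B be finite sets with |A| ≤ |B|, let f be a uniformly random matching of A into B, let a_1, …, a_k be pairwise distinct elements of A, let S_b ⊆ B, and for each i let X_i be the indicator random variable of the event f(a_i) ∈ S_b. Then E[∏_{i=1}^{k} X_i] ≤ ∏_{i=1}^{k} E[X_i] and E[∏_{i=1}^{k} (1 − X_i)] ≤ ∏_{i=1}^{k} E[1 − X_i]; that is, the family {X_i} is negative cylinder dependent. -/
/-! Permutations of `β` act transitively on injective tuples `ι ↪ β`, and restriction along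
`a : ι ↪ α` commutes with this action, so all its fibres have the same size: `f ∘ a` is uniformly
distributed over the injective tuples. Hence, with `s = |S|` and `n = |β|`, all `f (a i)` lie
in `S` with probability `(s)ₖ / (n)ₖ = ∏ⱼ (s - j) / (n - j)`, which is at most
`(s / n)ᵏ = ∏ᵢ P[f (a i) ∈ S]`.
The complementary indicators are the same statement for `Sᶜ`. -/

open scoped Classical

open Finset Function

namespace MulActionHom

variable {G X Y : Type*} [Group G] [MulAction G X] [MulAction G Y] [Fintype X]
  [MulAction.IsPretransitive G Y]

theorem card_fiber_eq (φ : X →[G] Y) (y y' : Y) : #{x | φ x = y} = #{x | φ x = y'} := by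
  obtain ⟨g, rfl⟩ := MulAction.exists_smul_eq G y y'
  exact card_equiv (MulAction.toPerm g) fun x => by simp [map_smul]

theorem card_filter_mem_mul_card [Fintype Y] (φ : X →[G] Y) (P : Finset Y) :
    #{x | φ x ∈ P} * Fintype.card Y = #P * Fintype.card X := by
  cases isEmpty_or_nonempty Y with
  | inl hY => simp [Finset.eq_empty_of_isEmpty P]
  | inr hY =>
    obtain ⟨y₀⟩ := hY
    have hcount : ∀ Q : Finset Y, #{x | φ x ∈ Q} = #Q * #{x | φ x = y₀} := fun Q => by
      rw [← sum_card_fiberwise_eq_card_filter, sum_const_nat fun y _ => card_fiber_eq φ y y₀]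
    have hX : Fintype.card X = Fintype.card Y * #{x | φ x = y₀} := by
      simpa using hcount univ
    rw [hcount, hX]
    ring

end MulActionHom

theorem Nat.descFactorial_mul_pow_le_pow_mul_descFactorial {s n : ℕ} (h : s ≤ n) :
    ∀ k, s.descFactorial k * n ^ k ≤ s ^ k * n.descFactorial k
  | 0 => by simp
  | k + 1 => by
    have hstep : (s - k) * n ≤ s * (n - k) := by
      rw [Nat.sub_mul, Nat.mul_sub]
      exact Nat.sub_le_sub_left (by rw [Nat.mul_comm k n]; exact Nat.mul_le_mul_right k h) _
    calc s.descFactorial (k + 1) * n ^ (k + 1)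
        = s.descFactorial k * n ^ k * ((s - k) * n) := by rw [descFactorial_succ]; ring
      _ ≤ s ^ k * n.descFactorial k * (s * (n - k)) :=
          Nat.mul_le_mul (descFactorial_mul_pow_le_pow_mul_descFactorial h k) hstep
      _ = s ^ (k + 1) * n.descFactorial (k + 1) := by rw [descFactorial_succ]; ring

theorem Nat.descFactorial_div_descFactorial_le {s n : ℕ} (h : s ≤ n) (k : ℕ) :
    (s.descFactorial k : ℝ) / n.descFactorial k ≤ ((s : ℝ) / n) ^ k := by
  rcases (n.descFactorial k).eq_zero_or_pos with hzero | hpos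
  · rw [hzero, Nat.cast_zero, div_zero]
    positivity
  · have hpow : 0 < n ^ k := hpos.trans_le (descFactorial_le_pow n k)
    rw [div_pow, div_le_div_iff₀ (by exact_mod_cast hpos) (by exact_mod_cast hpow)]
    exact_mod_cast descFactorial_mul_pow_le_pow_mul_descFactorial h k

instance Equiv.Perm.isPretransitive_embedding {ι β : Type*} [Finite ι] :
    MulAction.IsPretransitive (Equiv.Perm β) (ι ↪ β) :=
  ⟨Equiv.Perm.exists_smul_eq_embedding⟩

namespace Function.Embedding

variable {ι α β : Type*}

@[simps]
def restrictHom (a : ι ↪ α) : (α ↪ β) →[Equiv.Perm β] (ι ↪ β) where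
  toFun f := a.trans f
  map_smul' _ _ := rfl

theorem card_filter_forall_mem [Fintype ι] [Fintype β] (T : Finset β) :
    #{g : ι ↪ β | ∀ i, g i ∈ T} = (#T).descFactorial (Fintype.card ι) := by
  rw [← Fintype.card_subtype]
  exact (Fintype.card_congr (Equiv.codRestrict ι (T : Set β))).trans
    (by simp [Fintype.card_embedding_eq])

variable [Fintype ι] [Fintype α] [Fintype β]

theorem card_filter_comp_mem_mul_descFactorial (a : ι ↪ α) (T : Finset β) :
    #{f : α ↪ β | ∀ i, f (a i) ∈ T} * (Fintype.card β).descFactorial (Fintype.card ι)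
      = (#T).descFactorial (Fintype.card ι) * Fintype.card (α ↪ β) := by
  rw [← card_filter_forall_mem, ← Fintype.card_embedding_eq]
  simpa using (restrictHom a).card_filter_mem_mul_card {g : ι ↪ β | ∀ i, g i ∈ T}

variable [Nonempty (α ↪ β)]

theorem card_filter_forall_mem_div_card (a : ι ↪ α) (T : Finset β) :
    (#{f : α ↪ β | ∀ i, f (a i) ∈ T} : ℝ) / Fintype.card (α ↪ β)
      = ((#T).descFactorial (Fintype.card ι) : ℝ) /
          (Fintype.card β).descFactorial (Fintype.card ι) := by
  have hN : (Fintype.card (α ↪ β) : ℝ) ≠ 0 := by exact_mod_cast Fintype.card_ne_zero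
  have hD : ((Fintype.card β).descFactorial (Fintype.card ι) : ℝ) ≠ 0 := by
    obtain ⟨e⟩ := ‹Nonempty (α ↪ β)›
    have : Nonempty (ι ↪ β) := ⟨a.trans e⟩
    rw [← Fintype.card_embedding_eq]
    exact_mod_cast Fintype.card_ne_zero
  rw [div_eq_div_iff hN hD]
  exact_mod_cast card_filter_comp_mem_mul_descFactorial a T

theorem card_filter_mem_div_card (x : α) (T : Finset β) :
    (#{f : α ↪ β | f x ∈ T} : ℝ) / Fintype.card (α ↪ β) = (#T : ℝ) / Fintype.card β := by
  simpa [Embedding.punit] using card_filter_forall_mem_div_card (Embedding.punit.{_, 1} x) T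

theorem expectation_prod_indicator_le (a : ι ↪ α) (T : Finset β) :
    (∑ f : α ↪ β, ∏ i, if f (a i) ∈ T then (1 : ℝ) else 0) / Fintype.card (α ↪ β)
      ≤ ∏ i, (∑ f : α ↪ β, if f (a i) ∈ T then (1 : ℝ) else 0) / Fintype.card (α ↪ β) := by
  simp only [Fintype.prod_boole, sum_boole, card_filter_forall_mem_div_card,
    card_filter_mem_div_card, prod_const, card_univ]
  exact Nat.descFactorial_div_descFactorial_le (card_le_univ T) _

end Function.Embedding

/-- For finite sets `A`, `B` with `|A| ≤ |B|`, a uniformly random matching `f : A ↪ B`,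
pairwise distinct `a_1, …, a_k ∈ A`, and `S_b ⊆ B`, the indicator random variables
`X i = 1[f (a i) ∈ S_b]` satisfy `E[∏ X i] ≤ ∏ E[X i]` and
`E[∏ (1 - X i)] ≤ ∏ E[1 - X i]`; i.e. the family is negative cylinder dependent. -/
theorem stmt2 {α β : Type*} [Fintype α] [Fintype β]
    (hcard : Fintype.card α ≤ Fintype.card β) {k : ℕ} (a : Fin k → α)
    (ha : Function.Injective a) (Sb : Finset β) :
    ((∑ f : α ↪ β, ∏ i : Fin k, (if f (a i) ∈ Sb then (1 : ℝ) else 0)) /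
        (Fintype.card (α ↪ β) : ℝ)
      ≤ ∏ i : Fin k,
          ((∑ f : α ↪ β, (if f (a i) ∈ Sb then (1 : ℝ) else 0)) /
            (Fintype.card (α ↪ β) : ℝ)))
    ∧
    ((∑ f : α ↪ β, ∏ i : Fin k, (1 - if f (a i) ∈ Sb then (1 : ℝ) else 0)) /
        (Fintype.card (α ↪ β) : ℝ)
      ≤ ∏ i : Fin k,
          ((∑ f : α ↪ β, (1 - if f (a i) ∈ Sb then (1 : ℝ) else 0)) /
            (Fintype.card (α ↪ β) : ℝ))) := by
  have : Nonempty (α ↪ β) := Embedding.nonempty_iff_card_le.mpr hcard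
  have hcompl (b : β) : (1 - if b ∈ Sb then (1 : ℝ) else 0) = if b ∈ Sbᶜ then 1 else 0 := by
    by_cases hb : b ∈ Sb <;> simp [hb]
  simp only [hcompl]
  exact ⟨Embedding.expectation_prod_indicator_le ⟨a, ha⟩ Sb,
    Embedding.expectation_prod_indicator_le ⟨a, ha⟩ Sbᶜ⟩
end

section
/- Let X_1, …, X_n be {0,1}-valued random variables on a probability space such that the family {X_i} is 1-correlated, let μ = E[∑_{i=1}^n X_i], and let μ̄ ≥ μ be any upper bound on the mean. Then for every δ with 0 < δ ≤ 1, Pr[∑_{i=1}^n X_i ≥ (1 + δ)μ̄] ≤ exp(−δ²μ̄/3). -/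
/-!
Chernoff's argument survives with 1-correlation in place of independence. For `x ∈ {0, 1}`,
`exp (t x) = 1 + c x` with `c = eᵗ - 1 ≥ 0`, so the moment generating function of `∑ Xᵢ` at `t` is
`E ∏ (1 + c Xᵢ)`. Expanded over subsets this is `∑_S c^|S| E ∏_{i ∈ S} Xᵢ`, a combination with
nonnegative coefficients, so 1-correlation bounds it termwise by `∏ (1 + c E Xᵢ) ≤ exp (c μ)`.
Markov's inequality at `t = log (1 + δ)` then gives `exp (δ μ̄ - (1 + δ) log (1 + δ) μ̄)`, and
`(1 + δ) log (1 + δ) ≥ δ + δ² / 3` on `[0, 1]`.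
-/

open MeasureTheory ProbabilityTheory Finset Real

lemma Real.add_sq_div_three_le_one_add_mul_log_one_add {δ : ℝ} (hδ0 : 0 ≤ δ) (hδ1 : δ ≤ 1) :
    δ + δ ^ 2 / 3 ≤ (1 + δ) * log (1 + δ) := by
  have hlog := mul_le_mul_of_nonneg_left (le_log_one_add_of_nonneg hδ0) (by linarith : 0 ≤ 1 + δ)
  have hrat : δ + δ ^ 2 / 3 ≤ (1 + δ) * (2 * δ / (δ + 2)) := by
    rw [mul_div_assoc', le_div_iff₀ (by linarith)]
    nlinarith
  linarith

lemma Real.exp_mul_eq_one_add_mul_of_eq_zero_or_eq_one {x : ℝ} (hx : x = 0 ∨ x = 1) (t : ℝ) :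
    exp (t * x) = 1 + (exp t - 1) * x := by
  rcases hx with rfl | rfl <;> simp

lemma Finset.prod_one_add_mul {ι R : Type*} [CommSemiring R] (s : Finset ι) (c : R)
    (f : ι → R) : ∏ i ∈ s, (1 + c * f i) = ∑ t ∈ s.powerset, c ^ #t * ∏ i ∈ t, f i := by
  simp only [prod_one_add, prod_mul_distrib, prod_const]

section

variable {Ω ι : Type*} [MeasurableSpace Ω] {P : Measure Ω} {X : ι → Ω → ℝ}

lemma integrable_finset_prod_of_abs_le_one [IsFiniteMeasure P] (hmeas : ∀ i, Measurable (X i))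
    (hX : ∀ i ω, |X i ω| ≤ 1) (s : Finset ι) : Integrable (fun ω => ∏ i ∈ s, X i ω) P := by
  refine .of_bound (s.measurable_prod fun i _ => hmeas i).aestronglyMeasurable 1 (ae_of_all _ ?_)
  intro ω
  rw [Real.norm_eq_abs, abs_prod]
  exact prod_le_one (fun i _ => abs_nonneg _) fun i _ => hX i ω

def OneCorrelated (P : Measure Ω) (X : ι → Ω → ℝ) : Prop :=
  ∀ S : Finset ι, ∫ ω, ∏ i ∈ S, X i ω ∂P ≤ ∏ i ∈ S, ∫ ω, X i ω ∂P

namespace OneCorrelated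

lemma integral_prod_one_add_mul_le (hX : OneCorrelated P X)
    (hint : ∀ S : Finset ι, Integrable (fun ω => ∏ i ∈ S, X i ω) P) {c : ℝ} (hc : 0 ≤ c)
    (s : Finset ι) : ∫ ω, ∏ i ∈ s, (1 + c * X i ω) ∂P ≤ ∏ i ∈ s, (1 + c * ∫ ω, X i ω ∂P) := by
  simp_rw [prod_one_add_mul]
  rw [integral_finsetSum _ fun S _ => (hint S).const_mul _]
  gcongr with S
  rw [integral_const_mul]
  exact mul_le_mul_of_nonneg_left (hX S) (by positivity)

variable [IsFiniteMeasure P] [Fintype ι]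

lemma mgf_sum_le (hX : OneCorrelated P X) (hmeas : ∀ i, Measurable (X i))
    (h01 : ∀ i ω, X i ω = 0 ∨ X i ω = 1) {t : ℝ} (ht : 0 ≤ t) :
    mgf (fun ω => ∑ i, X i ω) P t ≤ exp ((exp t - 1) * ∫ ω, ∑ i, X i ω ∂P) := by
  have hint := integrable_finset_prod_of_abs_le_one (P := P) hmeas fun i ω => by
    rcases h01 i ω with h | h <;> simp [h]
  have hc : 0 ≤ exp t - 1 := sub_nonneg.2 (one_le_exp ht)
  have hp : ∀ i, 0 ≤ ∫ ω, X i ω ∂P := fun i =>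
    integral_nonneg fun ω => (h01 i ω).elim (·.ge) (·.ge.trans' zero_le_one)
  calc mgf (fun ω => ∑ i, X i ω) P t = ∫ ω, ∏ i, (1 + (exp t - 1) * X i ω) ∂P := by
        simp_rw [mgf, mul_sum, exp_sum, exp_mul_eq_one_add_mul_of_eq_zero_or_eq_one (h01 _ _)]
    _ ≤ ∏ i, (1 + (exp t - 1) * ∫ ω, X i ω ∂P) := hX.integral_prod_one_add_mul_le hint hc _
    _ ≤ exp (∑ i, (exp t - 1) * ∫ ω, X i ω ∂P) :=
        prod_one_add_le_exp_sum _ fun i => mul_nonneg hc (hp i)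
    _ = exp ((exp t - 1) * ∫ ω, ∑ i, X i ω ∂P) := by
        rw [← mul_sum, integral_finsetSum _ fun i _ => by simpa using hint {i}]

lemma measureReal_sum_ge_le_exp (hX : OneCorrelated P X) (hmeas : ∀ i, Measurable (X i))
    (h01 : ∀ i ω, X i ω = 0 ∨ X i ω = 1) {t : ℝ} (ht : 0 ≤ t) (a : ℝ) :
    P.real {ω | a ≤ ∑ i, X i ω} ≤ exp (-t * a + (exp t - 1) * ∫ ω, ∑ i, X i ω ∂P) := by
  have hsum_le : ∀ ω, ∑ i, X i ω ≤ Fintype.card ι := fun ω => by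
    simpa using sum_le_sum fun i (_ : i ∈ univ) => (h01 i ω).elim (·.le.trans zero_le_one) (·.le)
  have hint : Integrable (fun ω => exp (t * ∑ i, X i ω)) P :=
    integrable_exp_mul_of_le t _ ht (by fun_prop) (ae_of_all _ hsum_le)
  calc P.real {ω | a ≤ ∑ i, X i ω} ≤ exp (-t * a) * mgf (fun ω => ∑ i, X i ω) P t :=
        measure_ge_le_exp_mul_mgf a ht hint
    _ ≤ exp (-t * a) * exp ((exp t - 1) * ∫ ω, ∑ i, X i ω ∂P) := by
        gcongr
        exact hX.mgf_sum_le hmeas h01 ht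
    _ = _ := (exp_add _ _).symm

end OneCorrelated

end

/-- Chernoff-type upper tail bound for a `1`-correlated family of `{0,1}`-valued random
variables: if `μ̄` is an upper bound on the mean `μ = E[∑ X i]`, then for every
`0 < δ ≤ 1`, `Pr[∑ X i ≥ (1 + δ)μ̄] ≤ exp(-δ²μ̄/3)`. -/
theorem stmt5 {Ω : Type*} [MeasurableSpace Ω] (P : Measure Ω) [IsProbabilityMeasure P]
    {n : ℕ} (X : Fin n → Ω → ℝ) (hmeas : ∀ i, Measurable (X i))
    (h01 : ∀ i ω, X i ω = 0 ∨ X i ω = 1)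
    (hcorr : ∀ S : Finset (Fin n),
      ∫ ω, ∏ i ∈ S, X i ω ∂P ≤ ∏ i ∈ S, ∫ ω, X i ω ∂P)
    (m mbar : ℝ) (hm : m = ∫ ω, ∑ i, X i ω ∂P) (hmbar : m ≤ mbar)
    (δ : ℝ) (hδ0 : 0 < δ) (hδ1 : δ ≤ 1) :
    P {ω | (1 + δ) * mbar ≤ ∑ i, X i ω} ≤ ENNReal.ofReal (Real.exp (-(δ ^ 2 * mbar) / 3)) := by
  have hm0 : 0 ≤ m := hm ▸ integral_nonneg fun ω =>
    sum_nonneg fun i _ => (h01 i ω).elim (·.ge) (·.ge.trans' zero_le_one)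
  have htail := OneCorrelated.measureReal_sum_ge_le_exp hcorr hmeas h01
    (log_nonneg (by linarith : 1 ≤ 1 + δ)) ((1 + δ) * mbar)
  rw [← hm, exp_log (by linarith), add_sub_cancel_left] at htail
  have hexponent := mul_le_mul_of_nonneg_left
    (add_sq_div_three_le_one_add_mul_log_one_add hδ0.le hδ1) (hm0.trans hmbar)
  rw [← ofReal_measureReal]
  exact ENNReal.ofReal_le_ofReal (htail.trans (exp_le_exp.2 (by nlinarith)))
end

section
/- Let X_1, …, X_n be {0,1}-valued random variables on a probability space such that the family {1 − X_i} is 1-correlated, let μ = E[∑_{i=1}^n X_i], and let μ̄ ≥ μ be any upper bound on the mean. Then for every δ > 0, Pr[∑_{i=1}^n X_i ≤ μ − δμ̄] ≤ exp(−δ²μ̄/2). -/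
/-!
Chernoff's method at `t = -δ`. As `X i ∈ {0,1}`, `exp (t * X i) = eᵗ + (1 - eᵗ) (1 - X i)` is an
affine function of `1 - X i` with nonnegative coefficients, so expanding `∏ i, exp (t * X i)` over
subsets and applying 1-correlation termwise gives the same moment generating function bound
`E[exp (t ∑ X i)] ≤ exp ((eᵗ - 1) μ)` as for independent variables. Markov's inequality then bounds
the tail by `exp (μ (δ - 1 + e^{-δ}) - δ² μ̄)`, and `e^{-δ} ≤ 1 - δ + δ²/2` together with `μ ≤ μ̄`
gives the exponent `-δ² μ̄ / 2`.
-/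

open MeasureTheory ProbabilityTheory Finset Real

theorem Real.exp_neg_le_one_sub_add_sq_div_two {x : ℝ} (hx : 0 ≤ x) :
    exp (-x) ≤ 1 - x + x ^ 2 / 2 := by
  let g : ℝ → ℝ := fun y => 1 - y + y ^ 2 / 2 - exp (-y)
  have hg' : ∀ y, HasDerivAt g (-1 + y + exp (-y)) y := fun y =>
    ((((hasDerivAt_id y).const_sub 1).add ((hasDerivAt_pow 2 y).div_const 2)).sub
      (hasDerivAt_neg y).exp).congr_deriv (by norm_num)
  have hg : Monotone g :=
    monotone_of_deriv_nonneg (fun y => (hg' y).differentiableAt) fun y => by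
      rw [(hg' y).deriv]
      linarith [add_one_le_exp (-y)]
  simpa [g] using hg hx

theorem Real.exp_mul_eq_of_eq_zero_or_eq_one {x : ℝ} (hx : x = 0 ∨ x = 1) (t : ℝ) :
    exp (t * x) = exp t + (1 - exp t) * (1 - x) := by
  rcases hx with rfl | rfl <;> simp

theorem Finset.prod_const_add_mul {ι R : Type*} [DecidableEq ι] [CommSemiring R] (a b : R)
    (y : ι → R) (s : Finset ι) :
    ∏ i ∈ s, (a + b * y i) = ∑ t ∈ s.powerset, a ^ #(s \ t) * b ^ #t * ∏ i ∈ t, y i := by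
  simp_rw [add_comm a, prod_add, prod_mul_distrib, prod_const]
  exact sum_congr rfl fun t _ => by ring

section OneCorrelated

variable {Ω ι : Type*} [MeasurableSpace Ω] {P : Measure Ω}

def IsOneCorrelated (P : Measure Ω) (Y : ι → Ω → ℝ) : Prop :=
  ∀ S : Finset ι, ∫ ω, ∏ i ∈ S, Y i ω ∂P ≤ ∏ i ∈ S, ∫ ω, Y i ω ∂P

theorem IsOneCorrelated.integral_prod_const_add_mul_le {Y : ι → Ω → ℝ}
    (hY : IsOneCorrelated P Y) (hint : ∀ t : Finset ι, Integrable (fun ω => ∏ i ∈ t, Y i ω) P)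
    {a b : ℝ} (ha : 0 ≤ a) (hb : 0 ≤ b) (s : Finset ι) :
    ∫ ω, ∏ i ∈ s, (a + b * Y i ω) ∂P ≤ ∏ i ∈ s, (a + b * ∫ ω, Y i ω ∂P) := by
  classical
  simp_rw [prod_const_add_mul]
  rw [integral_finsetSum _ fun t _ => (hint t).const_mul _]
  refine sum_le_sum fun t _ => ?_
  rw [integral_const_mul]
  exact mul_le_mul_of_nonneg_left (hY t) (by positivity)

theorem integrable_prod_of_abs_le_one [IsFiniteMeasure P] {Y : ι → Ω → ℝ}
    (hY : ∀ i, AEStronglyMeasurable (Y i) P) (hY1 : ∀ i ω, |Y i ω| ≤ 1) (t : Finset ι) :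
    Integrable (fun ω => ∏ i ∈ t, Y i ω) P :=
  Integrable.of_bound (Finset.aestronglyMeasurable_fun_prod t fun i _ => hY i) 1 <|
    ae_of_all _ fun ω => by
      rw [norm_prod]
      exact prod_le_one (fun i _ => norm_nonneg _) fun i _ => hY1 i ω

theorem IsOneCorrelated.mgf_sum_le [IsProbabilityMeasure P] [Fintype ι] {X : ι → Ω → ℝ}
    (hX : ∀ i, Measurable (X i))
    (h01 : ∀ i ω, X i ω = 0 ∨ X i ω = 1) (hcorr : IsOneCorrelated P fun i ω => 1 - X i ω)
    {t : ℝ} (ht : t ≤ 0) :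
    mgf (fun ω => ∑ i, X i ω) P t ≤ exp ((exp t - 1) * ∫ ω, ∑ i, X i ω ∂P) := by
  have hY1 : ∀ i ω, |1 - X i ω| ≤ 1 := fun i ω => by rcases h01 i ω with h | h <;> simp [h]
  have hXint (i : ι) : Integrable (X i) P :=
    .of_bound (hX i).aestronglyMeasurable 1 <| ae_of_all _ fun ω => by
      rcases h01 i ω with h | h <;> simp [h]
  have hYint := integrable_prod_of_abs_le_one (P := P)
    (fun i => (measurable_const.sub (hX i)).aestronglyMeasurable) hY1
  have hpoint (ω : Ω) :
      exp (t * ∑ i, X i ω) = ∏ i, (exp t + (1 - exp t) * (1 - X i ω)) := by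
    rw [mul_sum, exp_sum]
    exact prod_congr rfl fun i _ => exp_mul_eq_of_eq_zero_or_eq_one (h01 i ω) t
  have hb : 0 ≤ 1 - exp t := sub_nonneg.2 (exp_le_one_iff.2 ht)
  calc mgf (fun ω => ∑ i, X i ω) P t
      = ∫ ω, ∏ i, (exp t + (1 - exp t) * (1 - X i ω)) ∂P := by simp only [mgf, hpoint]
    _ ≤ ∏ i, (exp t + (1 - exp t) * ∫ ω, 1 - X i ω ∂P) :=
      hcorr.integral_prod_const_add_mul_le hYint (exp_pos t).le hb _
    _ ≤ ∏ i, exp ((exp t - 1) * ∫ ω, X i ω ∂P) := by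
      refine prod_le_prod (fun i _ => ?_) fun i _ => ?_
      · have : 0 ≤ ∫ ω, 1 - X i ω ∂P := integral_nonneg fun ω => by
          rcases h01 i ω with h | h <;> simp [h]
        positivity
      · rw [integral_sub (integrable_const 1) (hXint i), integral_const, probReal_univ, one_smul]
        linarith [add_one_le_exp ((exp t - 1) * ∫ ω, X i ω ∂P)]
    _ = exp ((exp t - 1) * ∫ ω, ∑ i, X i ω ∂P) := by
      rw [← exp_sum, ← mul_sum, integral_finsetSum _ fun i _ => hXint i]

end OneCorrelated

/-- Chernoff-type lower tail bound for `{0,1}`-valued random variables `X i` whose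
complements `1 - X i` form a `1`-correlated family: if `μ̄` is an upper bound on the mean
`μ = E[∑ X i]`, then for every `δ > 0`, `Pr[∑ X i ≤ μ - δμ̄] ≤ exp(-δ²μ̄/2)`. -/
theorem stmt6 {Ω : Type*} [MeasurableSpace Ω] (P : Measure Ω) [IsProbabilityMeasure P]
    {n : ℕ} (X : Fin n → Ω → ℝ) (hmeas : ∀ i, Measurable (X i))
    (h01 : ∀ i ω, X i ω = 0 ∨ X i ω = 1)
    (hcorr : ∀ S : Finset (Fin n),
      ∫ ω, ∏ i ∈ S, (1 - X i ω) ∂P ≤ ∏ i ∈ S, ∫ ω, (1 - X i ω) ∂P)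
    (m mbar : ℝ) (hm : m = ∫ ω, ∑ i, X i ω ∂P) (hmbar : m ≤ mbar)
    (δ : ℝ) (hδ0 : 0 < δ) :
    P {ω | ∑ i, X i ω ≤ m - δ * mbar} ≤ ENNReal.ofReal (Real.exp (-(δ ^ 2 * mbar) / 2)) := by
  have hsum0 (ω : Ω) : 0 ≤ ∑ i, X i ω :=
    sum_nonneg fun i _ => by rcases h01 i ω with h | h <;> simp [h]
  have hm0 : 0 ≤ m := hm ▸ integral_nonneg hsum0
  have hint : Integrable (fun ω => exp (-δ * ∑ i, X i ω)) P :=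
    .of_bound (by fun_prop) 1 <| ae_of_all _ fun ω => by
      rw [norm_of_nonneg (exp_pos _).le, exp_le_one_iff]
      exact mul_nonpos_of_nonpos_of_nonneg (neg_nonpos.2 hδ0.le) (hsum0 ω)
  have hmgf := IsOneCorrelated.mgf_sum_le hmeas h01 hcorr (neg_nonpos.2 hδ0.le)
  have hgap_nonneg : 0 ≤ δ - 1 + exp (-δ) := by linarith [add_one_le_exp (-δ)]
  have hgap_le : δ - 1 + exp (-δ) ≤ δ ^ 2 / 2 := by
    linarith [exp_neg_le_one_sub_add_sq_div_two hδ0.le]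
  have hexponent : m * (δ - 1 + exp (-δ)) ≤ mbar * (δ ^ 2 / 2) :=
    (mul_le_mul_of_nonneg_right hmbar hgap_nonneg).trans
      (mul_le_mul_of_nonneg_left hgap_le (hm0.trans hmbar))
  rw [← ofReal_measureReal]
  refine ENNReal.ofReal_le_ofReal ?_
  calc P.real {ω | ∑ i, X i ω ≤ m - δ * mbar}
      ≤ exp (-(-δ) * (m - δ * mbar)) * mgf (fun ω => ∑ i, X i ω) P (-δ) :=
        measure_le_le_exp_mul_mgf _ (neg_nonpos.2 hδ0.le) hint
    _ ≤ exp (δ * (m - δ * mbar)) * exp ((exp (-δ) - 1) * m) := by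
        rw [neg_neg, hm]
        gcongr
    _ ≤ exp (-(δ ^ 2 * mbar) / 2) := by
        rw [← exp_add]
        gcongr
        linarith
end

section
/- Let A and B be nonempty finite sets with |A| ≤ |B| (the men and women of the whole population), let A_s ⊆ A and B_s ⊆ B (the men and women of a strip), let S_m ⊆ A_s with |S_m| = m and S_w ⊆ B_s with |S_w| = w, and set X = |A_s| − |B_s|. Let f be a uniformly random matching of A into B. Then the expected number of members of S_m ∪ S_w whose partner lies in the strip, namely E[|{a ∈ S_m : f(a) ∈ B_s}|] + E[|{b ∈ S_w : b ∈ f(A_s)}|], is at least ((m + w)²/2 − X²/2)/|B|, where |B| = max(|A|,|B|). -/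
/-!
For a fixed `a`, post-composing with a transposition of `B` permutes the embeddings `A ↪ B`
and moves the fibre `f a = b` onto `f a = b'`, so `f a` is uniform on `B`. Hence the first
expectation is `m |B_s| / |B|`. By injectivity, the women of `S_w` matched into `A_s` are in
bijection with the men of `A_s` matched into `S_w`, so the second expectation is
`|A_s| w / |B|`. The bound then follows from the identity
`m b + a w - ((m + w)² - (a - b)²) / 2 = m (a - m) + w (b - w) + ((a - m) - (b - w))² / 2`
with `a = |A_s|`, `b = |B_s|`.
-/

open scoped Classical
open Finset

namespace Function.Embedding

variable {α β : Type*}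

theorem card_filter_exists_apply_eq (f : α ↪ β) (S : Finset α) (T : Finset β) :
    #{b ∈ T | ∃ x ∈ S, f x = b} = #{a ∈ S | f a ∈ T} := by
  rw [← card_map f]
  congr 1
  ext b
  simp only [mem_filter, mem_map]
  aesop

variable [Fintype α] [Fintype β]

theorem card_filter_apply_eq_eq (a : α) (b b' : β) :
    #{f : α ↪ β | f a = b} = #{f : α ↪ β | f a = b'} := by
  have swap_swap (f : α ↪ β) : (f.trans (Equiv.swap b b').toEmbedding).trans
      (Equiv.swap b b').toEmbedding = f := by
    ext; simp
  refine card_bij' (fun f _ => f.trans (Equiv.swap b b').toEmbedding)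
    (fun f _ => f.trans (Equiv.swap b b').toEmbedding) ?_ ?_ (fun f _ => swap_swap f)
    (fun f _ => swap_swap f) <;>
  · intro f hf
    simp_all

theorem card_filter_apply_eq_mul_card (a : α) (b : β) :
    #{f : α ↪ β | f a = b} * Fintype.card β = Fintype.card (α ↪ β) := by
  have fibres := card_eq_sum_card_fiberwise (s := (univ : Finset (α ↪ β))) (t := univ)
    (f := fun f => f a) fun _ _ => mem_univ _
  rw [card_univ] at fibres
  rw [fibres, sum_congr rfl fun b' _ => card_filter_apply_eq_eq a b' b, sum_const, card_univ,
    smul_eq_mul, mul_comm]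

theorem sum_card_filter_apply_mem_mul_card (S : Finset α) (T : Finset β) :
    (∑ f : α ↪ β, #{a ∈ S | f a ∈ T}) * Fintype.card β = #S * #T * Fintype.card (α ↪ β) := by
  have count (f : α ↪ β) :
      #{a ∈ S | f a ∈ T} = ∑ a ∈ S, ∑ b ∈ T, if f a = b then 1 else 0 := by
    simp only [card_filter, sum_ite_eq]
  simp only [count]
  rw [sum_comm, sum_mul]
  refine (sum_congr rfl fun a _ => ?_).trans (by rw [sum_const, smul_eq_mul, mul_assoc])
  rw [sum_comm, sum_mul]
  refine (sum_congr rfl fun b _ => ?_).trans (by rw [sum_const, smul_eq_mul])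
  rw [← card_filter, card_filter_apply_eq_mul_card]

theorem sum_card_filter_apply_mem_div_card (hcard : Fintype.card α ≤ Fintype.card β)
    (S : Finset α) (T : Finset β) :
    (∑ f : α ↪ β, (#{a ∈ S | f a ∈ T} : ℝ)) / Fintype.card (α ↪ β)
      = #S * #T / Fintype.card β := by
  have hN : (Fintype.card (α ↪ β) : ℝ) ≠ 0 := by
    have := nonempty_of_card_le hcard
    positivity
  rcases (Fintype.card β).eq_zero_or_pos with hβ | hβ
  · have : IsEmpty α := Fintype.card_eq_zero_iff.mp (by omega)
    simp [S.eq_empty_of_isEmpty]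
  · have key := congrArg (Nat.cast : ℕ → ℝ) (sum_card_filter_apply_mem_mul_card S T)
    push_cast at key
    field_simp
    linarith

end Function.Embedding

theorem add_sq_sub_sub_sq_div_two_le {m w a b : ℝ} (hm : 0 ≤ m) (hw : 0 ≤ w)
    (hma : m ≤ a) (hwb : w ≤ b) :
    (m + w) ^ 2 / 2 - (a - b) ^ 2 / 2 ≤ m * b + a * w := by
  nlinarith [mul_nonneg hm (sub_nonneg.mpr hma), mul_nonneg hw (sub_nonneg.mpr hwb),
    sq_nonneg (a - m - (b - w))]

open Function.Embedding in
theorem stmt9_general {α β : Type*} [Fintype α] [Fintype β]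
    (hcard : Fintype.card α ≤ Fintype.card β)
    (As : Finset α) (Bs : Finset β) (Sm : Finset α) (Sw : Finset β)
    (hSm : Sm ⊆ As) (hSw : Sw ⊆ Bs) :
    (((Sm.card : ℝ) + (Sw.card : ℝ)) ^ 2 / 2 - ((As.card : ℝ) - (Bs.card : ℝ)) ^ 2 / 2) /
        (Fintype.card β : ℝ)
      ≤ ((∑ f : α ↪ β, ((Sm.filter (fun a => f a ∈ Bs)).card : ℝ)) /
            (Fintype.card (α ↪ β) : ℝ)
          + (∑ f : α ↪ β, ((Sw.filter (fun b => ∃ x ∈ As, f x = b)).card : ℝ)) /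
            (Fintype.card (α ↪ β) : ℝ)) := by
  simp only [card_filter_exists_apply_eq]
  rw [sum_card_filter_apply_mem_div_card hcard, sum_card_filter_apply_mem_div_card hcard,
    ← add_div]
  gcongr
  exact add_sq_sub_sub_sq_div_two_le (Nat.cast_nonneg _) (Nat.cast_nonneg _)
    (by exact_mod_cast card_le_card hSm) (by exact_mod_cast card_le_card hSw)

/-- For nonempty finite populations `A` (men) and `B` (women) with `|A| ≤ |B|`, a strip
consisting of men `A_s` and women `B_s`, subsets `S_m ⊆ A_s` and `S_w ⊆ B_s` of sizes
`m` and `w`, and imbalance `X = |A_s| - |B_s|`: under a uniformly random matching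
`f : A ↪ B`, the expected number of members of `S_m ∪ S_w` whose partner lies in the
strip is at least `((m + w)²/2 - X²/2)/|B|`. -/
theorem stmt9 {α β : Type*} [Fintype α] [Fintype β] [Nonempty α] [Nonempty β]
    (hcard : Fintype.card α ≤ Fintype.card β)
    (As : Finset α) (Bs : Finset β) (Sm : Finset α) (Sw : Finset β)
    (hSm : Sm ⊆ As) (hSw : Sw ⊆ Bs) :
    (((Sm.card : ℝ) + (Sw.card : ℝ)) ^ 2 / 2 - ((As.card : ℝ) - (Bs.card : ℝ)) ^ 2 / 2) /
        (Fintype.card β : ℝ)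
      ≤ ((∑ f : α ↪ β, ((Sm.filter (fun a => f a ∈ Bs)).card : ℝ)) /
            (Fintype.card (α ↪ β) : ℝ)
          + (∑ f : α ↪ β, ((Sw.filter (fun b => ∃ x ∈ As, f x = b)).card : ℝ)) /
            (Fintype.card (α ↪ β) : ℝ)) :=
  stmt9_general hcard As Bs Sm Sw hSm hSw
end

section
/- Let n ≥ 1 and let x_1, …, x_n be real numbers whose index set {1,…,n} is partitioned into consecutive blocks I_1, …, I_m (each I_j an interval of indices, in order). Suppose that for each block I_j with largest index e_j: (i) ∑_{i∈I_j} x_i = 0, and (ii) for every r ∈ I_j, |∑_{i=r}^{e_j} x_i| ≤ B, where B ≥ 0. Let w_1 ≤ w_2 ≤ … ≤ w_n be nondecreasing real numbers with w_n − w_1 ≤ 1. Then |∑_{i=1}^n w_i x_i| ≤ B. -/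
open Finset

/-- Abel summation identity on an interval. -/
lemma abel_id (w x : ℕ → ℝ) (c : ℕ) : ∀ d a, a + d = c →
    ∑ i ∈ Ico a c, w i * x i
      = w a * (∑ i ∈ Ico a c, x i)
        + ∑ i ∈ Ico (a+1) c, (w i - w (i-1)) * (∑ k ∈ Ico i c, x k) := by
  intro d
  induction d with
  | zero =>
    intro a ha
    subst ha
    simp
  | succ d ih =>
    intro a ha
    have hac : a < c := by omega
    have h1 : ∑ i ∈ Ico a c, w i * x i = w a * x a + ∑ i ∈ Ico (a+1) c, w i * x i :=
      Finset.sum_eq_sum_Ico_succ_bot hac _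
    have h2 : ∑ i ∈ Ico a c, x i = x a + ∑ i ∈ Ico (a+1) c, x i :=
      Finset.sum_eq_sum_Ico_succ_bot hac _
    have ih' := ih (a+1) (by omega)
    rcases Nat.eq_or_lt_of_le (Nat.succ_le_of_lt hac) with h | h
    · subst h
      simp [Nat.Ico_succ_singleton]
    · rw [h1, ih', h2, Finset.sum_eq_sum_Ico_succ_bot h
        (fun i => (w i - w (i-1)) * (∑ k ∈ Ico i c, x k))]
      have ha1 : a + 1 - 1 = a := by omega
      rw [ha1]
      ring

/-- Telescoping sum of weight increments. -/
lemma tel (w : ℕ → ℝ) (a : ℕ) : ∀ c, a < c →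
    ∑ i ∈ Ico (a+1) c, (w i - w (i-1)) = w (c-1) - w a := by
  intro c
  induction c with
  | zero => omega
  | succ c ih =>
    intro hc
    rcases Nat.eq_or_lt_of_le (Nat.succ_le_of_lt hc) with h | h
    · rw [← h]
      simp
    · have hac : a < c := by omega
      rw [Finset.sum_Ico_succ_top (by omega : a + 1 ≤ c), ih hac]
      have hc1 : c - 1 + 1 = c := by omega
      rw [show c + 1 - 1 = c from rfl]
      ring

/-- Per-block Abel bound. -/
lemma block_bound (w x : ℕ → ℝ) (n : ℕ) (B : ℝ) (hB : 0 ≤ B)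
    (hw : ∀ i j : ℕ, i ≤ j → j < n → w i ≤ w j)
    (a c : ℕ) (hac : a < c) (hcn : c ≤ n)
    (hzero : ∑ i ∈ Ico a c, x i = 0)
    (hsuf : ∀ r, a ≤ r → r < c → |∑ i ∈ Ico r c, x i| ≤ B) :
    |∑ i ∈ Ico a c, w i * x i| ≤ (w (c-1) - w a) * B := by
  rw [abel_id w x c (c - a) a (by omega), hzero, mul_zero, zero_add]
  calc |∑ i ∈ Ico (a+1) c, (w i - w (i-1)) * (∑ k ∈ Ico i c, x k)|
      ≤ ∑ i ∈ Ico (a+1) c, |(w i - w (i-1)) * (∑ k ∈ Ico i c, x k)| :=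
        Finset.abs_sum_le_sum_abs _ _
    _ ≤ ∑ i ∈ Ico (a+1) c, (w i - w (i-1)) * B := by
        apply Finset.sum_le_sum
        intro i hi
        rw [Finset.mem_Ico] at hi
        have hwi : w (i-1) ≤ w i := hw (i-1) i (by omega) (by omega)
        rw [abs_mul, abs_of_nonneg (by linarith)]
        exact mul_le_mul_of_nonneg_left (hsuf i (by omega) hi.2) (by linarith)
    _ = (w (c-1) - w a) * B := by rw [← Finset.sum_mul, tel w a c hac]

/-- Splitting a sum over consecutive blocks. -/
lemma split_blocks (f : ℕ → ℝ) (g : ℕ → ℕ) (hg : Monotone g) : ∀ m,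
    ∑ j ∈ range m, ∑ i ∈ Ico (g j) (g (j+1)), f i = ∑ i ∈ Ico (g 0) (g m), f i := by
  intro m
  induction m with
  | zero => simp
  | succ m ih =>
    rw [Finset.sum_range_succ, ih,
      Finset.sum_Ico_consecutive _ (hg (Nat.zero_le m)) (hg (Nat.le_succ m))]

/-- Telescoping inequality for block-end-minus-block-start weight differences. -/
lemma tel_ineq (w : ℕ → ℝ) (n : ℕ) (hw : ∀ i j : ℕ, i ≤ j → j < n → w i ≤ w j)
    (g : ℕ → ℕ) (hg0 : g 0 = 0) (hgn : ∀ j, g j ≤ n) :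
    ∀ m, (∀ j, j < m → g j < g (j+1)) →
      ∑ j ∈ range m, (w (g (j+1) - 1) - w (g j)) ≤ w (g m - 1) - w (g 0) := by
  intro m
  induction m with
  | zero => intro _; simp [hg0]
  | succ m ih =>
    intro hstrict
    have ih' := ih (fun j hj => hstrict j (by omega))
    rw [Finset.sum_range_succ]
    have h1 : g m < g (m+1) := hstrict m (by omega)
    have h2 : g m < n := lt_of_lt_of_le h1 (hgn (m+1))
    have h3 : w (g m - 1) ≤ w (g m) := hw (g m - 1) (g m) (by omega) h2
    linarith

/-- Multi-strip Abel-summation inequality: the indices `{0, …, n-1}` are partitioned into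
consecutive blocks `[b j, b (j+1))`; each block has zero total and all its within-block
suffix sums bounded by `B ≥ 0`; the weights `w` are nondecreasing on `{0, …, n-1}` with
total increase at most `1`. Then `|∑ w_i x_i| ≤ B`. -/
theorem stmt12 (n m : ℕ) (hn : 1 ≤ n) (x : ℕ → ℝ)
    (b : Fin (m + 1) → ℕ) (hb : StrictMono b) (hb0 : b 0 = 0) (hbm : b (Fin.last m) = n)
    (B : ℝ) (hB : 0 ≤ B)
    (hzero : ∀ j : Fin m, ∑ i ∈ Finset.Ico (b j.castSucc) (b j.succ), x i = 0)
    (hsuffix : ∀ j : Fin m, ∀ r : ℕ, b j.castSucc ≤ r → r < b j.succ →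
      |∑ i ∈ Finset.Ico r (b j.succ), x i| ≤ B)
    (w : ℕ → ℝ) (hw : ∀ i j : ℕ, i ≤ j → j < n → w i ≤ w j)
    (hw1 : w (n - 1) - w 0 ≤ 1) :
    |∑ i ∈ Finset.range n, w i * x i| ≤ B := by
  set g : ℕ → ℕ := fun j => b ⟨min j m, Nat.lt_succ_of_le (min_le_right _ _)⟩ with hg_def
  have hmono : Monotone g := by
    intro i j hij
    exact hb.monotone (by simp [Fin.le_def]; omega)
  have hg0 : g 0 = 0 := by
    have h : (⟨min 0 m, Nat.lt_succ_of_le (min_le_right _ _)⟩ : Fin (m+1)) = 0 := by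
      apply Fin.ext; simp
    rw [hg_def]; simp only [h]; exact hb0
  have hgm : g m = n := by
    have h : (⟨min m m, Nat.lt_succ_of_le (min_le_right _ _)⟩ : Fin (m+1)) = Fin.last m := by
      apply Fin.ext; simp
    rw [hg_def]; simp only [h]; exact hbm
  have hcast : ∀ j (hj : j < m),
      g j = b (Fin.castSucc ⟨j, hj⟩) ∧ g (j+1) = b (Fin.succ ⟨j, hj⟩) := by
    intro j hj
    constructor
    · simp only [hg_def]; congr 1; apply Fin.ext; simp; omega
    · simp only [hg_def]; congr 1; apply Fin.ext; simp; omega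
  have hstrict : ∀ j, j < m → g j < g (j+1) := by
    intro j hj
    rw [(hcast j hj).1, (hcast j hj).2]
    exact hb (by simp [Fin.lt_def])
  have hgn : ∀ j, g j ≤ n := by
    intro j
    rw [← hgm]
    exact hb.monotone (by simp [Fin.le_def])
  have hblock : ∀ j ∈ range m,
      |∑ i ∈ Ico (g j) (g (j+1)), w i * x i| ≤ (w (g (j+1) - 1) - w (g j)) * B := by
    intro j hj
    rw [Finset.mem_range] at hj
    obtain ⟨h1, h2⟩ := hcast j hj
    apply block_bound w x n B hB hw _ _ (hstrict j hj) (hgn _)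
    · rw [h1, h2]; exact hzero ⟨j, hj⟩
    · intro r hr hrc
      rw [h2] at hrc ⊢
      rw [h1] at hr
      exact hsuffix ⟨j, hj⟩ r hr hrc
  have htel : ∑ j ∈ range m, (w (g (j+1) - 1) - w (g j)) ≤ 1 := by
    have h := tel_ineq w n hw g hg0 hgn m hstrict
    rw [hg0, hgm] at h
    linarith
  calc |∑ i ∈ Finset.range n, w i * x i|
      = |∑ j ∈ range m, ∑ i ∈ Ico (g j) (g (j+1)), w i * x i| := by
        rw [split_blocks _ g hmono m, hg0, hgm, ← Finset.range_eq_Ico]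
    _ ≤ ∑ j ∈ range m, |∑ i ∈ Ico (g j) (g (j+1)), w i * x i| :=
        Finset.abs_sum_le_sum_abs _ _
    _ ≤ ∑ j ∈ range m, (w (g (j+1) - 1) - w (g j)) * B := Finset.sum_le_sum hblock
    _ = (∑ j ∈ range m, (w (g (j+1) - 1) - w (g j))) * B := (Finset.sum_mul _ _ _).symm
    _ ≤ 1 * B := mul_le_mul_of_nonneg_right htel hB
    _ = B := one_mul B
end

section
/- Let a, b, c ≥ 0 be real numbers and K ∈ ℕ. Let g : ℕ → ℝ satisfy g(k+1) = g(k) − c·(a·g(k)² − b) for all k < K, with g(k) ≥ 0 and a·g(k)² ≥ b for all k ≤ K. Let ḡ : ℝ → ℝ be differentiable on [0, K] with ḡ′(s) = −c·(a·ḡ(s)² − b) for all s ∈ [0, K], ḡ(0) = g(0), and with ḡ(s) ≥ 0 and a·ḡ(s)² ≥ b for all s ∈ [0, K]. Then ḡ(k) ≥ g(k) for every integer k with 0 ≤ k ≤ K. -/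
/-- Comparison lemma between the Euler-type recursion
`g(k+1) = g(k) - c·(a·g(k)² - b)` and the solution of the differential equation
`ḡ′ = -c·(a·ḡ² - b)` with `ḡ(0) = g(0)`: if both trajectories are nonnegative and stay
in the region `a·x² ≥ b` throughout `[0, K]`, then `ḡ(k) ≥ g(k)` at all integer times
`0 ≤ k ≤ K`. -/
theorem stmt13 (a b c : ℝ) (ha : 0 ≤ a) (hb : 0 ≤ b) (hc : 0 ≤ c) (K : ℕ)
    (g : ℕ → ℝ) (gbar : ℝ → ℝ)
    (hrec : ∀ k : ℕ, k < K → g (k + 1) = g k - c * (a * g k ^ 2 - b))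
    (hgpos : ∀ k : ℕ, k ≤ K → 0 ≤ g k)
    (hgb : ∀ k : ℕ, k ≤ K → b ≤ a * g k ^ 2)
    (hderiv : ∀ s ∈ Set.Icc (0 : ℝ) (K : ℝ),
      HasDerivWithinAt gbar (-c * (a * gbar s ^ 2 - b)) (Set.Icc (0 : ℝ) (K : ℝ)) s)
    (h0 : gbar 0 = g 0)
    (hgbarpos : ∀ s ∈ Set.Icc (0 : ℝ) (K : ℝ), 0 ≤ gbar s)
    (hgbarb : ∀ s ∈ Set.Icc (0 : ℝ) (K : ℝ), b ≤ a * gbar s ^ 2) :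
    ∀ k : ℕ, k ≤ K → g k ≤ gbar k := by
  have hcont : ContinuousOn gbar (Set.Icc 0 (K : ℝ)) :=
    fun s hs => (hderiv s hs).continuousWithinAt
  have hderivAt : ∀ s ∈ Set.Ioo (0 : ℝ) (K : ℝ),
      HasDerivAt gbar (-c * (a * gbar s ^ 2 - b)) s := by
    intro s hs
    exact (hderiv s (Set.Ioo_subset_Icc_self hs)).hasDerivAt (Icc_mem_nhds hs.1 hs.2)
  have hanti : AntitoneOn gbar (Set.Icc 0 (K : ℝ)) := by
    apply antitoneOn_of_deriv_nonpos (convex_Icc _ _) hcont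
    · intro x hx
      rw [interior_Icc] at hx
      exact (hderivAt x hx).differentiableAt.differentiableWithinAt
    · intro x hx
      rw [interior_Icc] at hx
      rw [(hderivAt x hx).deriv]
      have h1 := hgbarb x (Set.Ioo_subset_Icc_self hx)
      nlinarith
  intro k
  induction k with
  | zero =>
    intro _
    simp only [Nat.cast_zero]
    rw [h0]
  | succ k ih =>
    intro hk
    have hkK : k < K := hk
    have ih' := ih (Nat.le_of_succ_le hk)
    have hM : 0 ≤ c * (a * g k ^ 2 - b) := by
      have := hgb k (Nat.le_of_succ_le hk)
      nlinarith
    have hrek := hrec k hkK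
    have hcast : ((k + 1 : ℕ) : ℝ) = (k : ℝ) + 1 := by push_cast; ring
    have hkR : (0 : ℝ) ≤ (k : ℝ) := Nat.cast_nonneg k
    have hk1K : (k : ℝ) + 1 ≤ (K : ℝ) := by
      have : ((k + 1 : ℕ) : ℝ) ≤ (K : ℝ) := Nat.cast_le.mpr hk
      linarith [hcast ▸ this]
    rw [hcast]
    by_cases hcase : g k ≤ gbar ((k : ℝ) + 1)
    · have : g (k + 1) ≤ g k := by rw [hrek]; linarith
      linarith
    · push_neg at hcase
      -- IVT: find s ∈ [k, k+1] with gbar s = g k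
      have hsub : Set.Icc (k : ℝ) ((k : ℝ) + 1) ⊆ Set.Icc 0 (K : ℝ) := by
        intro x hx
        exact ⟨le_trans hkR hx.1, le_trans hx.2 hk1K⟩
      have hkmem : (k : ℝ) ∈ Set.Icc (0 : ℝ) (K : ℝ) := ⟨hkR, by linarith⟩
      have hk1mem : (k : ℝ) + 1 ∈ Set.Icc (0 : ℝ) (K : ℝ) := ⟨by linarith, hk1K⟩
      have hivt := intermediate_value_Icc' (by linarith : (k : ℝ) ≤ (k : ℝ) + 1)
        (hcont.mono hsub)
      have hmem : g k ∈ Set.Icc (gbar ((k : ℝ) + 1)) (gbar (k : ℝ)) :=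
        ⟨le_of_lt hcase, ih'⟩
      obtain ⟨s, hs, hgs⟩ := hivt hmem
      have hsmem : s ∈ Set.Icc (0 : ℝ) (K : ℝ) := hsub hs
      -- auxiliary monotone function on [s, k+1]
      set M := c * (a * g k ^ 2 - b) with hMdef
      have hmono : MonotoneOn (fun x => gbar x + M * x) (Set.Icc s ((k : ℝ) + 1)) := by
        apply monotoneOn_of_deriv_nonneg (convex_Icc _ _)
        · apply ContinuousOn.add
          · exact hcont.mono (fun x hx => ⟨le_trans hsmem.1 hx.1, le_trans hx.2 hk1K⟩)
          · exact (continuous_const.mul continuous_id).continuousOn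
        · intro x hx
          rw [interior_Icc] at hx
          have hxK : x ∈ Set.Ioo (0 : ℝ) (K : ℝ) :=
            ⟨lt_of_le_of_lt hsmem.1 hx.1, lt_of_lt_of_le hx.2 hk1K⟩
          have hd : HasDerivAt (fun x => gbar x + M * x) (-c * (a * gbar x ^ 2 - b) + M) x := by
            exact (hderivAt x hxK).add ((hasDerivAt_id x).const_mul M |>.congr_deriv (by ring))
          exact hd.differentiableAt.differentiableWithinAt
        · intro x hx
          rw [interior_Icc] at hx
          have hxK : x ∈ Set.Ioo (0 : ℝ) (K : ℝ) :=
            ⟨lt_of_le_of_lt hsmem.1 hx.1, lt_of_lt_of_le hx.2 hk1K⟩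
          have hd : HasDerivAt (fun x => gbar x + M * x) (-c * (a * gbar x ^ 2 - b) + M) x := by
            exact (hderivAt x hxK).add ((hasDerivAt_id x).const_mul M |>.congr_deriv (by ring))
          rw [hd.deriv]
          have hxle : gbar x ≤ gbar s :=
            hanti hsmem ⟨le_of_lt hxK.1, le_of_lt hxK.2⟩ (le_of_lt hx.1)
          have hxpos : 0 ≤ gbar x :=
            hgbarpos x ⟨le_of_lt hxK.1, le_of_lt hxK.2⟩
          rw [hgs] at hxle
          have hgkpos := hgpos k (Nat.le_of_succ_le hk)
          rw [hMdef]
          nlinarith [mul_nonneg hc ha, mul_le_mul hxle hxle hxpos hgkpos]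
      have hsle : s ∈ Set.Icc s ((k : ℝ) + 1) := ⟨le_refl s, hs.2⟩
      have ht1 : ((k : ℝ) + 1) ∈ Set.Icc s ((k : ℝ) + 1) := ⟨hs.2, le_refl _⟩
      have hle := hmono hsle ht1 hs.2
      simp only at hle
      have hslen : (k : ℝ) + 1 - s ≤ 1 := by linarith [hs.1]
      rw [hrek]
      rw [hgs] at hle
      nlinarith [hs.1]
end

section
/- Let L ≥ 1 be an integer and q ≥ 0 a real number. For each t ∈ ℕ let γ^{(t)} = (γ_1^{(t)}, …, γ_L^{(t)}) be nonnegative reals satisfying, for all t: γ_1^{(t+1)} ≤ q·γ_1^{(t)}, and γ_i^{(t+1)} ≤ q·γ_i^{(t)} + γ_{i−1}^{(t)} for all 2 ≤ i ≤ L. Define the potential φ(t) = ∑_{i=1}^{L} γ_i^{(t)} · 2^{L−i+1}. Then for all t ∈ ℕ, φ(t) ≤ (q + 1/2)^t · φ(0). In particular, if q ≤ 1/4 the potential shrinks by a factor of at least 3/4 per step. -/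
/-- Potential-function lemma for dispersal through strips: if at each step at most a `q`
fraction of the mass in a strip stays there and the rest moves to the next strip, then
the exponentially weighted potential `φ(t) = ∑_i γ_i(t)·2^{L-i+1}` satisfies
`φ(t) ≤ (q + 1/2)^t · φ(0)`. -/
theorem stmt14 (L : ℕ) (hL : 1 ≤ L) (q : ℝ) (hq : 0 ≤ q)
    (γ : ℕ → Fin L → ℝ) (hpos : ∀ t i, 0 ≤ γ t i)
    (hfirst : ∀ t : ℕ, γ (t + 1) ⟨0, hL⟩ ≤ q * γ t ⟨0, hL⟩)
    (hrest : ∀ t : ℕ, ∀ i : Fin L, 0 < i.val →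
      γ (t + 1) i ≤ q * γ t i + γ t ⟨i.val - 1, Nat.lt_of_le_of_lt (Nat.sub_le _ _) i.isLt⟩) :
    ∀ t : ℕ,
      ∑ i : Fin L, γ t i * (2 : ℝ) ^ (L - i.val) ≤
        (q + 1 / 2) ^ t * ∑ i : Fin L, γ 0 i * (2 : ℝ) ^ (L - i.val) := by
  classical
  -- extend γ by zero to natural indices
  set g : ℕ → ℕ → ℝ := fun t i => if h : i < L then γ t ⟨i, h⟩ else 0 with hg
  have hgpos : ∀ t i, 0 ≤ g t i := by
    intro t i
    simp only [hg]
    split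
    · exact hpos t _
    · exact le_refl 0
  -- potential as a sum over `range L`
  have hsum : ∀ t, ∑ i : Fin L, γ t i * (2 : ℝ) ^ (L - i.val)
      = ∑ i ∈ Finset.range L, g t i * (2 : ℝ) ^ (L - i) := by
    intro t
    rw [Finset.sum_range fun i => g t i * (2 : ℝ) ^ (L - i)]
    apply Finset.sum_congr rfl
    intro i _
    simp [hg, i.isLt]
  have hφpos : ∀ t, 0 ≤ ∑ i ∈ Finset.range L, g t i * (2 : ℝ) ^ (L - i) := by
    intro t
    apply Finset.sum_nonneg
    intro i _
    exact mul_nonneg (hgpos t i) (by positivity)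
  -- one-step contraction
  have step : ∀ t, ∑ i ∈ Finset.range L, g (t + 1) i * (2 : ℝ) ^ (L - i)
      ≤ (q + 1 / 2) * ∑ i ∈ Finset.range L, g t i * (2 : ℝ) ^ (L - i) := by
    intro t
    have h1 : ∑ i ∈ Finset.range L, g (t + 1) i * (2 : ℝ) ^ (L - i)
        ≤ ∑ i ∈ Finset.range L,
            (q * g t i + (if i = 0 then 0 else g t (i - 1))) * (2 : ℝ) ^ (L - i) := by
      apply Finset.sum_le_sum
      intro i hi
      rw [Finset.mem_range] at hi
      apply mul_le_mul_of_nonneg_right _ (by positivity)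
      by_cases h0 : i = 0
      · subst h0
        simpa [hg, hL, hi] using hfirst t
      · have hi0 : 0 < i := Nat.pos_of_ne_zero h0
        have := hrest t ⟨i, hi⟩ hi0
        have hi1 : i - 1 < L := Nat.lt_of_le_of_lt (Nat.sub_le _ _) hi
        simp only [hg, hi, hi1, dif_pos, if_neg h0]
        exact this
    have h2 : ∑ i ∈ Finset.range L,
          (q * g t i + (if i = 0 then 0 else g t (i - 1))) * (2 : ℝ) ^ (L - i)
        = q * (∑ i ∈ Finset.range L, g t i * (2 : ℝ) ^ (L - i))
          + ∑ i ∈ Finset.range L,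
              (if i = 0 then 0 else g t (i - 1)) * (2 : ℝ) ^ (L - i) := by
      rw [Finset.mul_sum, ← Finset.sum_add_distrib]
      apply Finset.sum_congr rfl
      intro i _
      ring
    -- handle the shifted sum
    have h3 : ∑ i ∈ Finset.range L,
          (if i = 0 then 0 else g t (i - 1)) * (2 : ℝ) ^ (L - i)
        ≤ (1 / 2) * ∑ i ∈ Finset.range L, g t i * (2 : ℝ) ^ (L - i) := by
      have e1 : ∑ i ∈ Finset.range L,
            (if i = 0 then 0 else g t (i - 1)) * (2 : ℝ) ^ (L - i)
          = ∑ i ∈ Finset.Ico 1 L, g t (i - 1) * (2 : ℝ) ^ (L - i) := by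
        rw [Finset.range_eq_Ico,
          ← Finset.sum_Ico_consecutive _ (Nat.zero_le 1) hL]
        have : ∑ i ∈ Finset.Ico 0 1,
            (if i = 0 then 0 else g t (i - 1)) * (2 : ℝ) ^ (L - i) = 0 := by
          simp
        rw [this, zero_add]
        apply Finset.sum_congr rfl
        intro i hi
        rw [Finset.mem_Ico] at hi
        rw [if_neg (by omega)]
      rw [e1, Finset.sum_Ico_eq_sum_range]
      have hL1 : L - 1 ≤ L := Nat.sub_le _ _
      calc ∑ j ∈ Finset.range (L - 1), g t (1 + j - 1) * (2 : ℝ) ^ (L - (1 + j))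
          = ∑ j ∈ Finset.range (L - 1), (1 / 2) * (g t j * (2 : ℝ) ^ (L - j)) := by
            apply Finset.sum_congr rfl
            intro j hj
            rw [Finset.mem_range] at hj
            have hjL : L - (1 + j) + 1 = L - j := by omega
            have hpow : (2 : ℝ) ^ (L - j) = 2 * (2 : ℝ) ^ (L - (1 + j)) := by
              rw [← hjL, pow_succ]; ring
            rw [hpow]
            simp only [Nat.add_sub_cancel_left]
            ring_nf
        _ ≤ ∑ j ∈ Finset.range L, (1 / 2) * (g t j * (2 : ℝ) ^ (L - j)) := by
            apply Finset.sum_le_sum_of_subset_of_nonneg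
              (Finset.range_subset_range.2 hL1)
            intro j _ _
            have := hgpos t j
            positivity
        _ = (1 / 2) * ∑ i ∈ Finset.range L, g t i * (2 : ℝ) ^ (L - i) := by
            rw [Finset.mul_sum]
    calc ∑ i ∈ Finset.range L, g (t + 1) i * (2 : ℝ) ^ (L - i)
        ≤ q * (∑ i ∈ Finset.range L, g t i * (2 : ℝ) ^ (L - i))
          + ∑ i ∈ Finset.range L,
              (if i = 0 then 0 else g t (i - 1)) * (2 : ℝ) ^ (L - i) := by
          rw [← h2]; exact h1
      _ ≤ q * (∑ i ∈ Finset.range L, g t i * (2 : ℝ) ^ (L - i))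
          + (1 / 2) * ∑ i ∈ Finset.range L, g t i * (2 : ℝ) ^ (L - i) := by
          linarith [h3]
      _ = (q + 1 / 2) * ∑ i ∈ Finset.range L, g t i * (2 : ℝ) ^ (L - i) := by ring
  -- induction
  intro t
  rw [hsum, hsum]
  induction t with
  | zero => simp
  | succ n ih =>
      calc ∑ i ∈ Finset.range L, g (n + 1) i * (2 : ℝ) ^ (L - i)
          ≤ (q + 1 / 2) * ∑ i ∈ Finset.range L, g n i * (2 : ℝ) ^ (L - i) := step n
        _ ≤ (q + 1 / 2) * ((q + 1 / 2) ^ n * ∑ i ∈ Finset.range L, g 0 i * (2 : ℝ) ^ (L - i)) := by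
            apply mul_le_mul_of_nonneg_left ih (by positivity)
        _ = (q + 1 / 2) ^ (n + 1) * ∑ i ∈ Finset.range L, g 0 i * (2 : ℝ) ^ (L - i) := by
            ring
end
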